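/- Let n ≥ 5 and let S ⊆ V(B_n) be a set of vertices. Decompose B_n into subgraphs B_n^1, ..., B_n^n by the last symbol, and let A_2 be the union of those B_n^i containing at most n−3 vertices of S. Then the subgraph A_2 − S (the induced subgraph on vertices of A_2 not in S) is connected. -/

import Mathlib

/-!
Write `tailCoset k f` for the permutations that agree with `f` at every position `≥ k`; it spans
a copy of `B_k`, split into `k` blocks (copies of `B_(k-1)`) by the value at position `k - 1`,
and the edges `u — u * swap (k-2) (k-1)` between two blocks form a matching of size `(k-2)!`.

`B_k` stays connected after deleting any `k - 2` vertices, by induction on `k`. If every block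
loses at most `k - 3` vertices, each block stays connected, and two blocks are joined by a surviving
matching edge, directly or through a third block: blocking two of these matchings would take
`2 (k-2)! > k - 2` deleted vertices. Otherwise all deleted vertices lie in a single block, every
other block is intact, and every vertex of the damaged block has a neighbour outside it.

Finally, every light block `B_n^i \ S` is connected by the case `k = n - 1`, and the
`(n-2)!` matching edges between two light blocks cannot all meet `S`, which has at most
`2 (n-3) < (n-2)!` vertices in them.
-/

open Equiv Set

/-- The bubble-sort graph `B_n`: the Cayley graph of the symmetric group on `Fin n`
generated by the adjacent transpositions (acting by right multiplication). -/
def bubbleSortGraph (n : ℕ) : SimpleGraph (Equiv.Perm (Fin n)) :=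
  SimpleGraph.fromRel (fun u v => ∃ i j : Fin n, (i : ℕ) + 1 = (j : ℕ) ∧ v = u * Equiv.swap i j)

namespace SimpleGraph

variable {V : Type*} (G : SimpleGraph V)

def ReachableIn (s : Set V) (a b : V) : Prop :=
  ∃ (ha : a ∈ s) (hb : b ∈ s), (G.induce s).Reachable ⟨a, ha⟩ ⟨b, hb⟩

variable {G} {s t : Set V} {a b c : V}

theorem preconnected_induce_iff_reachableIn :
    (G.induce s).Preconnected ↔ ∀ a ∈ s, ∀ b ∈ s, G.ReachableIn s a b :=
  ⟨fun h _ ha _ hb => ⟨ha, hb, h _ _⟩,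
    fun h ⟨_, ha⟩ ⟨_, hb⟩ => (h _ ha _ hb).choose_spec.choose_spec⟩

namespace ReachableIn

theorem refl (ha : a ∈ s) : G.ReachableIn s a a :=
  ⟨ha, ha, .rfl⟩

theorem symm (h : G.ReachableIn s a b) : G.ReachableIn s b a :=
  let ⟨ha, hb, r⟩ := h
  ⟨hb, ha, r.symm⟩

theorem trans (hab : G.ReachableIn s a b) (hbc : G.ReachableIn s b c) : G.ReachableIn s a c :=
  let ⟨ha, _, r⟩ := hab
  let ⟨_, hc, r'⟩ := hbc
  ⟨ha, hc, r.trans r'⟩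

theorem mono (hst : s ⊆ t) (h : G.ReachableIn s a b) : G.ReachableIn t a b :=
  let ⟨ha, hb, r⟩ := h
  ⟨hst ha, hst hb, r.map (G.induceHomOfLE hst).toHom⟩

theorem of_adj (ha : a ∈ s) (hb : b ∈ s) (hab : G.Adj a b) : G.ReachableIn s a b :=
  ⟨ha, hb, Adj.reachable (G := G.induce s) hab⟩

end ReachableIn

end SimpleGraph

theorem Set.ncard_le_ncard_inter_union_image {α : Type*} [Finite α] {E T : Set α}
    {σ : α → α} (hσ : InjOn σ E) (hdisj : Disjoint E (σ '' E))
    (hcover : ∀ u ∈ E, u ∉ T → σ u ∈ T) :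
    E.ncard ≤ (T ∩ (E ∪ σ '' E)).ncard := by
  classical
  set φ : α → α := fun u => if u ∈ T then u else σ u
  have hφ : InjOn φ E := by
    intro u hu u' hu' h
    by_cases huT : u ∈ T <;> by_cases hu'T : u' ∈ T <;>
      simp only [φ, huT, hu'T, if_true, if_false] at h
    · exact h
    · exact (hdisj.ne_of_mem hu (mem_image_of_mem σ hu') h).elim
    · exact (hdisj.ne_of_mem hu' (mem_image_of_mem σ hu) h.symm).elim
    · exact hσ hu hu' h
  have hmaps : φ '' E ⊆ T ∩ (E ∪ σ '' E) := by
    rintro _ ⟨u, hu, rfl⟩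
    by_cases huT : u ∈ T
    · simpa [φ, huT] using Or.inl hu
    · simpa [φ, huT, hcover u hu huT] using Or.inr (mem_image_of_mem σ hu)
  calc E.ncard = (φ '' E).ncard := hφ.ncard_image.symm
    _ ≤ _ := ncard_le_ncard hmaps

open SimpleGraph

namespace BubbleSort

variable {n : ℕ}

-- The left coset of the pointwise stabiliser of the positions `≥ k` containing any permutation
-- that agrees with `f` there.
def tailCoset (k : ℕ) (f : Fin n → Fin n) : Set (Perm (Fin n)) :=
  {u | ∀ j : Fin n, k ≤ (j : ℕ) → u j = f j}

theorem mem_tailCoset_self (k : ℕ) (u : Perm (Fin n)) : u ∈ tailCoset k u := fun _ _ => rfl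

theorem mem_tailCoset_of_le {k : ℕ} (hk : n ≤ k) (f : Fin n → Fin n) (u : Perm (Fin n)) :
    u ∈ tailCoset k f := fun j hj => absurd j.2 (by omega)

theorem tailCoset_mono {k l : ℕ} (hkl : k ≤ l) (f : Fin n → Fin n) :
    tailCoset k f ⊆ tailCoset l f := fun _ hu j hj => hu j (hkl.trans hj)

theorem tailCoset_eq_of_mem {k : ℕ} {f : Fin n → Fin n} {u : Perm (Fin n)}
    (hu : u ∈ tailCoset k f) : tailCoset k u = tailCoset k f := by
  ext w
  exact forall₂_congr fun j hj => by rw [hu j hj]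

theorem tailCoset_subset_of_mem {k l : ℕ} (hkl : k ≤ l) {f : Fin n → Fin n} {u : Perm (Fin n)}
    (hu : u ∈ tailCoset l f) : tailCoset k u ⊆ tailCoset l f :=
  tailCoset_eq_of_mem hu ▸ tailCoset_mono hkl u

theorem mul_swap_mem_tailCoset {k : ℕ} {f : Fin n → Fin n} {u : Perm (Fin n)}
    (hu : u ∈ tailCoset k f) {i j : Fin n} (hi : (i : ℕ) < k) (hj : (j : ℕ) < k) :
    u * swap i j ∈ tailCoset k f := by
  intro m hm
  rw [Perm.mul_apply, swap_apply_of_ne_of_ne (by omega) (by omega)]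
  exact hu m hm

theorem tailCoset_subsingleton {k : ℕ} (hk : k ≤ 1) (f : Fin n → Fin n) :
    (tailCoset k f).Subsingleton := by
  intro u hu v hv
  ext x
  by_cases hx : k ≤ (x : ℕ)
  · rw [hu x hx, hv x hx]
  obtain ⟨y, hy⟩ := v.surjective (u x)
  obtain rfl : y = x := by
    by_contra hyx
    have hy' : k ≤ (y : ℕ) := by have := Fin.val_ne_of_ne hyx; omega
    exact hyx (u.injective ((hu y hy').trans ((hv y hy').symm.trans hy)))
  rw [hy]

theorem factorial_le_ncard_tailCoset {k : ℕ} (hk : k ≤ n) (u : Perm (Fin n)) :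
    k.factorial ≤ (tailCoset k u).ncard := by
  classical
  let e : Fin k ↪ Fin n := Fin.castLEEmb hk
  have hmem (σ : Perm (Fin k)) : u * σ.viaFintypeEmbedding e ∈ tailCoset k u := by
    intro j hj
    have : j ∉ range e := by
      rintro ⟨i, rfl⟩
      exact absurd hj (by simp [e])
    rw [Perm.mul_apply, Perm.viaFintypeEmbedding_apply_notMem_range _ _ this]
  have hinj : Function.Injective fun σ : Perm (Fin k) => (⟨_, hmem σ⟩ : tailCoset k u) := by
    intro σ τ h
    have h' := mul_left_cancel (congrArg Subtype.val h)
    ext i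
    have := congrArg (fun π : Perm (Fin n) => π (e i)) h'
    simp only [Perm.viaFintypeEmbedding_apply_image] at this
    exact congrArg Fin.val (e.injective this)
  have := Nat.card_le_card_of_injective _ hinj
  rwa [Nat.card_perm, Nat.card_eq_fintype_card, Fintype.card_fin, Nat.card_coe_set_eq] at this

theorem bubbleSortGraph_adj_mul_swap (u : Perm (Fin n)) {i j : Fin n} (hij : (i : ℕ) + 1 = j) :
    (bubbleSortGraph n).Adj u (u * swap i j) := by
  refine ⟨fun h => ?_, Or.inl ⟨i, j, hij, rfl⟩⟩
  have hne : i ≠ j := fun h => by rw [h] at hij; omega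
  simpa [hne] using congrArg (fun π : Perm (Fin n) => π i) h

theorem reachableIn_of_ncard_inter_le {k : ℕ}
    (hconn : ∀ (g : Fin n → Fin n) (T : Set (Perm (Fin n))),
      T.ncard ≤ k - 2 → ((bubbleSortGraph n).induce (tailCoset k g \ T)).Preconnected)
    {g : Fin n → Fin n} {T : Set (Perm (Fin n))} (hT : (T ∩ tailCoset k g).ncard ≤ k - 2)
    {x y : Perm (Fin n)} (hx : x ∈ tailCoset k g \ T) (hy : y ∈ tailCoset k g \ T) :
    (bubbleSortGraph n).ReachableIn (tailCoset k g \ T) x y := by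
  rw [← sdiff_inter_self_eq_sdiff] at hx hy ⊢
  exact preconnected_induce_iff_reachableIn.1 (hconn g _ hT) x hx y hy

section Blocks

variable {p q : Fin n} {f : Fin n → Fin n} {T : Set (Perm (Fin n))} {x y : Perm (Fin n)}

-- Both ends of the edges `u — u * swap p q` between the two blocks of `tailCoset (q + 1) f`
-- whose values at `q` form `e`.
def crossEnds (f : Fin n → Fin n) (p q : Fin n) (e : Sym2 (Fin n)) : Set (Perm (Fin n)) :=
  {u ∈ tailCoset (q + 1) f | s(u q, u p) = e}

theorem mem_tailCoset_of_apply_eq (hx : x ∈ tailCoset (q + 1) f) (hy : y ∈ tailCoset (q + 1) f)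
    (hxy : x q = y q) : y ∈ tailCoset q x := by
  intro j hj
  rcases (Nat.eq_or_lt_of_le hj) with hjq | hqj
  · rw [Fin.ext hjq.symm, hxy]
  · rw [hy j hqj, hx j hqj]

theorem mem_tailCoset_iff_of_succ_eq (hq : (q : ℕ) + 1 = n) :
    y ∈ tailCoset q x ↔ y q = x q :=
  ⟨fun hy => hy q le_rfl, fun h =>
    mem_tailCoset_of_apply_eq (mem_tailCoset_of_le hq.ge x x) (mem_tailCoset_of_le hq.ge x y)
      h.symm⟩

theorem exists_mem_tailCoset_apply_eq (hpq : (p : ℕ) + 1 = q) (hx : x ∈ tailCoset (q + 1) f)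
    (hy : y ∈ tailCoset (q + 1) f) (hxy : x q ≠ y q) : ∃ u ∈ tailCoset q x, u p = y q := by
  set r := x⁻¹ (y q)
  have hxr : x r = y q := by simp [r]
  have hr : (r : ℕ) < q := by
    by_contra! hqr
    rcases (Nat.eq_or_lt_of_le hqr) with hqr | hqr
    · rw [← Fin.ext hqr] at hxr
      exact hxy hxr
    · have hyr : y r = y q := by rw [hy r hqr, ← hx r hqr, hxr]
      exact absurd (Fin.ext_iff.1 (y.injective hyr)) (by omega)
  exact ⟨x * swap p r, mul_swap_mem_tailCoset (mem_tailCoset_self _ x) (by omega) hr,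
    by simp [r]⟩

theorem exists_mem_tailCoset_apply_ne (hq : 2 ≤ (q : ℕ)) (hx : x ∈ tailCoset (q + 1) f)
    (v : Fin n) : ∃ c ∈ tailCoset (q + 1) f, c q ≠ x q ∧ c q ≠ v := by
  have hswap (m : Fin n) (hm : (m : ℕ) < q) (hmv : m ≠ x⁻¹ v) :
      ∃ c ∈ tailCoset (q + 1) f, c q ≠ x q ∧ c q ≠ v := by
    refine ⟨x * swap m q, mul_swap_mem_tailCoset hx (by omega) (by omega), ?_, ?_⟩ <;>
      simp only [Perm.mul_apply, swap_apply_right]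
    · exact fun h => absurd (Fin.ext_iff.1 (x.injective h)) (by omega)
    · exact fun h => hmv (by rw [← h]; simp)
  by_cases h0 : ((x⁻¹ v : Fin n) : ℕ) = 0
  · exact hswap ⟨1, by omega⟩ (by simp; omega) (fun h => by simp [← h] at h0)
  · exact hswap ⟨0, by omega⟩ (by simp; omega) (fun h => h0 (by simp [← h]))

theorem exists_mul_swap_notMem_or_factorial_le (hpq : (p : ℕ) + 1 = q)
    (hx : x ∈ tailCoset (q + 1) f) (hy : y ∈ tailCoset (q + 1) f) (hxy : x q ≠ y q) :
    (∃ u ∈ tailCoset (q + 1) f, u q = x q ∧ u p = y q ∧ u ∉ T ∧ u * swap p q ∉ T) ∨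
      (p : ℕ).factorial ≤ (T ∩ crossEnds f p q s(x q, y q)).ncard := by
  by_contra! h
  obtain ⟨hfree, hcount⟩ := h
  obtain ⟨u₀, hu₀, hu₀p⟩ := exists_mem_tailCoset_apply_eq hpq hx hy hxy
  set E := tailCoset p u₀
  have hE (u) (hu : u ∈ E) : u ∈ tailCoset (q + 1) f ∧ u q = x q ∧ u p = y q := by
    have hux : u ∈ tailCoset q x := tailCoset_subset_of_mem (by omega) hu₀ hu
    exact ⟨tailCoset_subset_of_mem (by omega) hx hux, hux q le_rfl, (hu p le_rfl).trans hu₀p⟩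
  set σ : Perm (Fin n) → Perm (Fin n) := (· * swap p q)
  have hσq (u : Perm (Fin n)) : σ u q = u p := by simp [σ]
  have hσp (u : Perm (Fin n)) : σ u p = u q := by simp [σ]
  have hdisj : Disjoint E (σ '' E) := by
    rw [Set.disjoint_left]
    rintro u hu ⟨v, hv, rfl⟩
    exact hxy (by rw [← (hE _ hu).2.1, hσq, (hE v hv).2.2])
  have hcover : E ∪ σ '' E ⊆ crossEnds f p q s(x q, y q) := by
    rintro _ (hu | ⟨u, hu, rfl⟩)
    · obtain ⟨huF, hux, huy⟩ := hE _ hu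
      exact ⟨huF, by rw [hux, huy]⟩
    · obtain ⟨huF, hux, huy⟩ := hE _ hu
      exact ⟨mul_swap_mem_tailCoset huF (by omega) (by omega),
        by rw [hσq, hσp, hux, huy, Sym2.eq_swap]⟩
  refine (hcount.trans_le ?_).false
  calc (p : ℕ).factorial ≤ E.ncard := factorial_le_ncard_tailCoset (by omega) u₀
    _ ≤ (T ∩ (E ∪ σ '' E)).ncard :=
        ncard_le_ncard_inter_union_image (mul_left_injective _).injOn hdisj
          fun u hu => hfree u (hE u hu).1 (hE u hu).2.1 (hE u hu).2.2
    _ ≤ _ := ncard_le_ncard (inter_subset_inter_right _ hcover)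

theorem ncard_inter_crossEnds_lt_factorial (hT : T.ncard ≤ p) {e e' : Sym2 (Fin n)}
    (hee' : e ≠ e') (he : (p : ℕ).factorial ≤ (T ∩ crossEnds f p q e).ncard) :
    (T ∩ crossEnds f p q e').ncard < (p : ℕ).factorial := by
  have hdisj : Disjoint (T ∩ crossEnds f p q e) (T ∩ crossEnds f p q e') :=
    Set.disjoint_left.2 fun u hu hu' => hee' (hu.2.2.symm.trans hu'.2.2)
  have := ncard_union_eq hdisj ▸ ncard_le_ncard (union_subset inter_subset_left inter_subset_left)
  have := Nat.self_le_factorial p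
  have := Nat.factorial_pos p
  omega

theorem reachableIn_via_mul_swap (hpq : (p : ℕ) + 1 = q) {Y : Set (Perm (Fin n))}
    (hxblock : ∀ z ∈ Y, z q = x q → (bubbleSortGraph n).ReachableIn Y x z)
    (hyblock : ∀ z ∈ Y, z q = y q → (bubbleSortGraph n).ReachableIn Y y z)
    {u : Perm (Fin n)} (hu : u ∈ Y) (hus : u * swap p q ∈ Y) (hux : u q = x q)
    (huy : u p = y q) : (bubbleSortGraph n).ReachableIn Y x y :=
  (hxblock u hu hux).trans <|
    (ReachableIn.of_adj hu hus (bubbleSortGraph_adj_mul_swap u hpq)).trans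
      (hyblock _ hus (by simp [huy])).symm

variable (hconn : ∀ (g : Fin n → Fin n) (T : Set (Perm (Fin n))),
  T.ncard ≤ q - 2 → ((bubbleSortGraph n).induce (tailCoset q g \ T)).Preconnected)
include hconn

theorem reachableIn_of_apply_eq (hx : x ∈ tailCoset (q + 1) f \ T)
    (hy : y ∈ tailCoset (q + 1) f \ T) (hxy : x q = y q)
    (hT : (T ∩ tailCoset q x).ncard ≤ q - 2) :
    (bubbleSortGraph n).ReachableIn (tailCoset (q + 1) f \ T) x y :=
  (reachableIn_of_ncard_inter_le hconn hT ⟨mem_tailCoset_self _ x, hx.2⟩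
    ⟨mem_tailCoset_of_apply_eq hx.1 hy.1 hxy, hy.2⟩).mono
    (sdiff_subset_sdiff_left (tailCoset_subset_of_mem (Nat.le_succ _) hx.1))

theorem preconnected_induce_diff_of_forall_ncard_inter_le (hpq : (p : ℕ) + 1 = q)
    (hT : T.ncard ≤ q - 1)
    (hgood : ∀ x ∈ tailCoset (q + 1) f, (T ∩ tailCoset q x).ncard ≤ q - 2) :
    ((bubbleSortGraph n).induce (tailCoset (q + 1) f \ T)).Preconnected := by
  set Y := tailCoset (q + 1) f \ T
  have hblock (x) (hx : x ∈ Y) (z) (hz : z ∈ Y) (hzx : z q = x q) :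
      (bubbleSortGraph n).ReachableIn Y x z :=
    reachableIn_of_apply_eq hconn hx hz hzx.symm (hgood x hx.1)
  have hcross (x) (hx : x ∈ Y) (y) (hy : y ∈ Y) (u) (hu : u ∈ tailCoset (q + 1) f)
      (hux : u q = x q) (huy : u p = y q) (huT : u ∉ T) (husT : u * swap p q ∉ T) :
      (bubbleSortGraph n).ReachableIn Y x y :=
    reachableIn_via_mul_swap hpq (hblock x hx) (hblock y hy) ⟨hu, huT⟩
      ⟨mul_swap_mem_tailCoset hu (by omega) (by omega), husT⟩ hux huy
  have hTp : T.ncard ≤ p := by omega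
  rw [preconnected_induce_iff_reachableIn]
  intro a ha b hb
  by_cases hab : a q = b q
  · exact hblock a ha b hb hab.symm
  rcases exists_mul_swap_notMem_or_factorial_le hpq ha.1 hb.1 hab with
    ⟨u, hu, hua, hub, huT⟩ | hab_count
  · exact hcross a ha b hb u hu hua hub huT.1 huT.2
  have hq : 2 ≤ (q : ℕ) := by
    have := (hab_count.trans (ncard_le_ncard inter_subset_left)).trans hT
    have := Nat.factorial_pos p
    omega
  obtain ⟨c, hc, hca, hcb⟩ := exists_mem_tailCoset_apply_ne hq ha.1 (b q)
  rcases exists_mul_swap_notMem_or_factorial_le (T := T) hpq ha.1 hc (Ne.symm hca) with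
    ⟨u, hu, hua, huc, huT, husT⟩ | hac_count
  swap
  · exact (hac_count.not_gt
      (ncard_inter_crossEnds_lt_factorial hTp (by simp; grind) hab_count)).elim
  rcases exists_mul_swap_notMem_or_factorial_le (T := T) hpq hc hb.1 hcb with
    ⟨v, hv, hvc, hvb, hvT, hvsT⟩ | hcb_count
  swap
  · exact (hcb_count.not_gt
      (ncard_inter_crossEnds_lt_factorial hTp (by simp; grind) hab_count)).elim
  have hw : u * swap p q ∈ Y := ⟨mul_swap_mem_tailCoset hu (by omega) (by omega), husT⟩
  exact (hcross a ha _ hw u hu hua (by simp) huT husT).trans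
    (hcross _ hw b hb v hv (by simp [hvc, huc]) hvb hvT hvsT)

theorem preconnected_induce_diff_of_subset_tailCoset (hpq : (p : ℕ) + 1 = q) {x₀ : Perm (Fin n)}
    (hT : T ⊆ tailCoset q x₀) :
    ((bubbleSortGraph n).induce (tailCoset (q + 1) f \ T)).Preconnected := by
  set Y := tailCoset (q + 1) f \ T
  have hnotT (x : Perm (Fin n)) (hx : x q ≠ x₀ q) : x ∉ T := fun hxT => hx (hT hxT q le_rfl)
  have hblock (x) (hx : x ∈ Y) (hxq : x q ≠ x₀ q) (z) (hz : z ∈ Y) (hzx : z q = x q) :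
      (bubbleSortGraph n).ReachableIn Y x z := by
    have hempty : T ∩ tailCoset q x = ∅ := eq_empty_of_forall_notMem fun w ⟨hwT, hwx⟩ =>
      hxq ((hwx q le_rfl).symm.trans (hT hwT q le_rfl))
    exact reachableIn_of_apply_eq hconn hx hz hzx.symm (by simp [hempty])
  have hescape (x) (hx : x ∈ Y) :
      ∃ x' ∈ Y, x' q ≠ x₀ q ∧ (bubbleSortGraph n).ReachableIn Y x x' := by
    by_cases hxq : x q = x₀ q
    · have hne : (x * swap p q) q ≠ x₀ q := by
        simpa [← hxq] using x.injective.ne (Fin.ne_of_val_ne (by omega))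
      have hw : x * swap p q ∈ Y :=
        ⟨mul_swap_mem_tailCoset hx.1 (by omega) (by omega), hnotT _ hne⟩
      exact ⟨_, hw, hne, ReachableIn.of_adj hx hw (bubbleSortGraph_adj_mul_swap x hpq)⟩
    · exact ⟨x, hx, hxq, ReachableIn.refl hx⟩
  rw [preconnected_induce_iff_reachableIn]
  intro a ha b hb
  obtain ⟨a', ha', ha'q, haa'⟩ := hescape a ha
  obtain ⟨b', hb', hb'q, hbb'⟩ := hescape b hb
  refine haa'.trans (ReachableIn.trans ?_ hbb'.symm)
  by_cases hab : a' q = b' q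
  · exact hblock a' ha' ha'q b' hb' hab.symm
  obtain ⟨u, hu, hup⟩ := exists_mem_tailCoset_apply_eq hpq ha'.1 hb'.1 hab
  have huq : u q = a' q := hu q le_rfl
  have huF := tailCoset_subset_of_mem (Nat.le_succ _) ha'.1 hu
  exact reachableIn_via_mul_swap hpq (hblock a' ha' ha'q) (hblock b' hb' hb'q)
    ⟨huF, hnotT u (huq ▸ ha'q)⟩
    ⟨mul_swap_mem_tailCoset huF (by omega) (by omega), hnotT _ (by simpa [hup])⟩ huq hup

theorem preconnected_induce_tailCoset_succ_diff (hpq : (p : ℕ) + 1 = q) (hT : T.ncard ≤ q - 1) :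
    ((bubbleSortGraph n).induce (tailCoset (q + 1) f \ T)).Preconnected := by
  by_cases hgood : ∀ x ∈ tailCoset (q + 1) f, (T ∩ tailCoset q x).ncard ≤ q - 2
  · exact preconnected_induce_diff_of_forall_ncard_inter_le hconn hpq hT hgood
  push Not at hgood
  obtain ⟨x₀, -, hbig⟩ := hgood
  have hTx₀ : T ∩ tailCoset q x₀ = T := eq_of_subset_of_ncard_le inter_subset_left (by omega)
  exact preconnected_induce_diff_of_subset_tailCoset hconn hpq (hTx₀ ▸ inter_subset_right)

end Blocks

theorem preconnected_induce_tailCoset_diff {k : ℕ} (hk : k ≤ n) (f : Fin n → Fin n)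
    (T : Set (Perm (Fin n))) (hT : T.ncard ≤ k - 2) :
    ((bubbleSortGraph n).induce (tailCoset k f \ T)).Preconnected := by
  induction k generalizing f T with
  | zero =>
    have : Subsingleton ↥(tailCoset 0 f \ T) :=
      (subsingleton_coe _).2 ((tailCoset_subsingleton zero_le_one f).anti sdiff_subset)
    exact Preconnected.of_subsingleton
  | succ k ih =>
    rcases k with _ | k
    · have : Subsingleton ↥(tailCoset 1 f \ T) :=
        (subsingleton_coe _).2 ((tailCoset_subsingleton le_rfl f).anti sdiff_subset)
      exact Preconnected.of_subsingleton
    · exact preconnected_induce_tailCoset_succ_diff (q := ⟨k + 1, by omega⟩)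
        (fun g T' hT' => ih (by omega) g T' hT') (p := ⟨k, by omega⟩) rfl hT

theorem preconnected_induce_setOf_ncard_inter_tailCoset_le_diff (hn : 5 ≤ n) {p q : Fin n}
    (hpq : (p : ℕ) + 1 = q) (hq : (q : ℕ) + 1 = n) (S : Set (Perm (Fin n))) :
    ((bubbleSortGraph n).induce
      ({u : Perm (Fin n) | (S ∩ tailCoset q u).ncard ≤ n - 3} \ S)).Preconnected := by
  set A := {u : Perm (Fin n) | (S ∩ tailCoset q u).ncard ≤ n - 3}
  have hA (x y : Perm (Fin n)) (hyx : y q = x q) (hx : x ∈ A) : y ∈ A := by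
    have := tailCoset_eq_of_mem ((mem_tailCoset_iff_of_succ_eq hq).2 hyx)
    simpa only [A, mem_ofPred_eq, this] using hx
  have hblock (x) (hx : x ∈ A \ S) (z) (hz : z ∈ A \ S) (hzx : z q = x q) :
      (bubbleSortGraph n).ReachableIn (A \ S) x z :=
    (reachableIn_of_ncard_inter_le
      (fun g T hT => preconnected_induce_tailCoset_diff (by omega) g T hT)
      (hx.1.trans_eq (by omega)) ⟨mem_tailCoset_self _ x, hx.2⟩
      ⟨(mem_tailCoset_iff_of_succ_eq hq).2 hzx, hz.2⟩).mono
      fun w hw => ⟨hA x w ((mem_tailCoset_iff_of_succ_eq hq).1 hw.1) hx.1, hw.2⟩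
  rw [preconnected_induce_iff_reachableIn]
  intro a ha b hb
  by_cases hab : a q = b q
  · exact hblock a ha b hb hab.symm
  have hF (u : Perm (Fin n)) : u ∈ tailCoset (q + 1) a := mem_tailCoset_of_le hq.ge _ u
  rcases exists_mul_swap_notMem_or_factorial_le (T := S) hpq (hF a) (hF b) hab with
    ⟨u, -, hua, hub, huS, husS⟩ | hcount
  · exact reachableIn_via_mul_swap hpq (hblock a ha) (hblock b hb) ⟨hA a u hua ha.1, huS⟩
      ⟨hA b _ (by simp [hub]) hb.1, husS⟩ hua hub
  have hsub :
      S ∩ crossEnds a p q s(a q, b q) ⊆ (S ∩ tailCoset q a) ∪ (S ∩ tailCoset q b) := by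
    rintro u ⟨huS, -, hu⟩
    rcases Sym2.eq_iff.1 hu with ⟨h, -⟩ | ⟨h, -⟩
    · exact Or.inl ⟨huS, (mem_tailCoset_iff_of_succ_eq hq).2 h⟩
    · exact Or.inr ⟨huS, (mem_tailCoset_iff_of_succ_eq hq).2 h⟩
  have hfac : 2 * (n - 3) < (p : ℕ).factorial := calc
    2 * (n - 3) < (n - 3 + 1) * 2 := by omega
    _ ≤ (n - 3 + 1) * (n - 3).factorial :=
      Nat.mul_le_mul_left _ ((by omega : 2 ≤ n - 3).trans (Nat.self_le_factorial _))
    _ = (p : ℕ).factorial := by rw [← Nat.factorial_succ]; congr 1; omega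
  have hSa : (S ∩ tailCoset q a).ncard ≤ n - 3 := ha.1
  have hSb : (S ∩ tailCoset q b).ncard ≤ n - 3 := hb.1
  have := hcount.trans ((ncard_le_ncard hsub).trans (ncard_union_le _ _))
  omega

end BubbleSort

open BubbleSort in
theorem stmt_10 (n : ℕ) (hn : 5 ≤ n) (S : Set (Equiv.Perm (Fin n))) :
    letI last : Fin n := ⟨n - 1, by omega⟩
    -- `A₂` is the union of the subgraphs `Bₙⁱ` containing at most `n - 3` vertices of `S`
    letI A₂ : Set (Equiv.Perm (Fin n)) :=
      {u | ({v ∈ S | v last = u last}).ncard ≤ n - 3}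
    ((bubbleSortGraph n).induce (A₂ \ S)).Preconnected := by
  set last : Fin n := ⟨n - 1, by omega⟩
  have hlast : (last : ℕ) + 1 = n := by simp only [last]; omega
  have hA₂ : {u : Perm (Fin n) | {v ∈ S | v last = u last}.ncard ≤ n - 3} =
      {u : Perm (Fin n) | (S ∩ tailCoset last u).ncard ≤ n - 3} := by
    simp only [← mem_tailCoset_iff_of_succ_eq hlast, sep_mem_eq]
  rw [hA₂]
  exact preconnected_induce_setOf_ncard_inter_tailCoset_le_diff hn (p := ⟨n - 2, by omega⟩)
    (by simp only [last]; omega) hlast S
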